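/- Let N > p > 1 and define u(x) = −p·log‖x‖ for x ∈ ℝ^N with 0 < ‖x‖ < 1. Then u is differentiable on the punctured unit ball, its flux at every such x equals −p^{p−1}·x/‖x‖^p, this flux vector field is differentiable with −Δ_p u(x) = p^{p−1}·(N−p)·‖x‖^{−p} = p^{p−1}·(N−p)·e^{u(x)} for all 0 < ‖x‖ < 1, and u(x) = 0 whenever ‖x‖ = 1. -/

import Mathlib

/-!
Off the origin `∇(c log ‖x‖) = c x / ‖x‖²`, so the flux of `u = -p log ‖x‖` is the radial field
`-p^(p-1) ‖x‖^(-p) x`. The derivative of `x ↦ ‖x‖^s x` is `‖x‖^s I + s ‖x‖^(s-2) x ⊗ x`, whose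
trace in `ℝ^N` is `(N + s) ‖x‖^s`; with `s = -p` this gives `-Δ_p u`, and `e^u = ‖x‖^(-p)`.
-/
open Real Set Metric MeasureTheory

/-- The "flux" of `u` at `x`: `‖∇u(x)‖^(p-2) ∇u(x)` (equal to `0` when `∇u(x) = 0`,
by the junk-value conventions of `Real.rpow`, since `p ≠ 2` gives `0 ^ (p-2) = 0` and
for `p = 2` the scalar multiplies the zero vector). -/
noncomputable def flux {N : ℕ} (p : ℝ) (u : EuclideanSpace ℝ (Fin N) → ℝ)
    (x : EuclideanSpace ℝ (Fin N)) : EuclideanSpace ℝ (Fin N) :=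
  ‖gradient u x‖ ^ (p - 2) • gradient u x

/-- The divergence of a vector field `V` at `x`: `∑ i, ∂V_i/∂x_i (x)`. -/
noncomputable def pdiv {N : ℕ} (V : EuclideanSpace ℝ (Fin N) → EuclideanSpace ℝ (Fin N))
    (x : EuclideanSpace ℝ (Fin N)) : ℝ :=
  ∑ i : Fin N, fderiv ℝ V x (EuclideanSpace.single i 1) i

section InnerProductSpace

variable {F : Type*} [NormedAddCommGroup F] [InnerProductSpace ℝ F]

theorem hasGradientAt_const_mul_log_norm [CompleteSpace F] (c : ℝ) {x : F} (hx : x ≠ 0) :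
    HasGradientAt (fun y => c * Real.log ‖y‖) ((c / ‖x‖ ^ 2) • x) x := by
  have hsq : ‖x‖ ^ 2 ≠ 0 := by positivity
  have h := ((hasStrictFDerivAt_norm_sq x).hasFDerivAt.log hsq).const_mul (c / 2)
  have hfun : (fun y : F => c * Real.log ‖y‖) = fun y => c / 2 * Real.log (‖y‖ ^ 2) := by
    ext y; rw [Real.log_pow]; push_cast; ring
  rw [hasGradientAt_iff_hasFDerivAt, hfun]
  refine h.congr_fderiv ?_
  ext v
  simp only [smul_apply, coe_innerSL_apply, nsmul_eq_mul, Nat.cast_ofNat, smul_eq_mul, map_smul,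
    InnerProductSpace.toDual_apply_apply]
  field_simp

theorem hasFDerivAt_norm_rpow_of_ne_zero (s : ℝ) {x : F} (hx : x ≠ 0) :
    HasFDerivAt (fun y : F => ‖y‖ ^ s) ((s * ‖x‖ ^ (s - 2)) • innerSL ℝ x) x := by
  convert! ((hasStrictFDerivAt_norm_sq x).rpow_const (p := s / 2) (by simp [hx])).hasFDerivAt
    using 1
  · ext y; rw [← Real.rpow_natCast_mul (norm_nonneg _)]; norm_num; ring_nf
  · simp_rw [← Real.rpow_natCast_mul (norm_nonneg _), ← Nat.cast_smul_eq_nsmul ℝ, smul_smul]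
    ring_nf

theorem hasFDerivAt_norm_rpow_smul (s : ℝ) {x : F} (hx : x ≠ 0) :
    HasFDerivAt (fun y : F => ‖y‖ ^ s • y)
      (‖x‖ ^ s • ContinuousLinearMap.id ℝ F
        + ((s * ‖x‖ ^ (s - 2)) • innerSL ℝ x).smulRight x) x :=
  (hasFDerivAt_norm_rpow_of_ne_zero s hx).smul (hasFDerivAt_id x)

end InnerProductSpace

theorem Filter.EventuallyEq.pdiv_eq {N : ℕ}
    {V W : EuclideanSpace ℝ (Fin N) → EuclideanSpace ℝ (Fin N)} {x : EuclideanSpace ℝ (Fin N)}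
    (h : V =ᶠ[nhds x] W) : pdiv V x = pdiv W x := by
  simp only [pdiv, h.fderiv_eq]

theorem pdiv_const_smul_norm_rpow_smul {N : ℕ} (c s : ℝ) {x : EuclideanSpace ℝ (Fin N)}
    (hx : x ≠ 0) :
    pdiv (fun y => c • ‖y‖ ^ s • y) x = c * ((N + s) * ‖x‖ ^ s) := by
  have hpow : ‖x‖ ^ s = ‖x‖ ^ (s - 2) * ‖x‖ ^ 2 := by
    rw [← Real.rpow_natCast, ← Real.rpow_add (norm_pos_iff.mpr hx)]; norm_num
  have hV : HasFDerivAt (fun y => c • ‖y‖ ^ s • y) _ x :=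
    (hasFDerivAt_norm_rpow_smul s hx).const_smul c
  rw [pdiv, hV.fderiv]
  have hsum : ∑ i, x i * x i = ‖x‖ ^ 2 := by
    simp only [EuclideanSpace.real_norm_sq_eq, ← sq]
  simp only [smul_apply, add_apply, ContinuousLinearMap.id_apply,
    ContinuousLinearMap.smulRight_apply, coe_innerSL_apply, EuclideanSpace.inner_single_right,
    conj_trivial, PiLp.add_apply, PiLp.smul_apply, PiLp.single_eq_same, smul_eq_mul, one_mul,
    mul_one]
  simp only [mul_assoc, ← Finset.mul_sum, Finset.sum_add_distrib, Finset.sum_const,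
    Finset.card_univ, Fintype.card_fin, nsmul_eq_mul, hsum]
  rw [hpow]
  ring

theorem flux_const_mul_log_norm {N : ℕ} (p c : ℝ) {x : EuclideanSpace ℝ (Fin N)} (hx : x ≠ 0) :
    flux p (fun y => c * Real.log ‖y‖) x = (|c| ^ (p - 2) * c) • ‖x‖ ^ (-p) • x := by
  have hn : 0 < ‖x‖ := norm_pos_iff.mpr hx
  rw [flux, (hasGradientAt_const_mul_log_norm c hx).gradient, norm_smul, smul_smul, smul_smul]
  congr 1
  rw [Real.norm_eq_abs, abs_div, abs_of_pos (by positivity : 0 < ‖x‖ ^ 2), sq, ← div_div,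
    div_mul_cancel₀ _ hn.ne', Real.div_rpow (abs_nonneg c) hn.le, Real.rpow_neg hn.le,
    Real.rpow_sub hn, Real.rpow_two]
  field_simp

theorem stmt16_general {N : ℕ} (p : ℝ) (hp : 1 < p)
    (u : EuclideanSpace ℝ (Fin N) → ℝ)
    (hu : u = fun x => -p * Real.log ‖x‖) :
    (∀ x : EuclideanSpace ℝ (Fin N), 0 < ‖x‖ → ‖x‖ < 1 →
      DifferentiableAt ℝ u x ∧
      flux p u x = (-(p ^ (p - 1) / ‖x‖ ^ p)) • x ∧
      DifferentiableAt ℝ (flux p u) x ∧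
      -pdiv (flux p u) x = p ^ (p - 1) * ((N : ℝ) - p) * ‖x‖ ^ (-p) ∧
      -pdiv (flux p u) x = p ^ (p - 1) * ((N : ℝ) - p) * Real.exp (u x)) ∧
    ∀ x : EuclideanSpace ℝ (Fin N), ‖x‖ = 1 → u x = 0 := by
  subst hu
  have hp0 : 0 < p := by linarith
  have hcoeff : |-p| ^ (p - 2) * -p = -p ^ (p - 1) := by
    rw [abs_neg, abs_of_pos hp0, mul_neg, ← Real.rpow_add_one hp0.ne']
    ring_nf
  refine ⟨fun x hx0 _ => ?_, fun x hx => by simp [hx]⟩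
  have hx : x ≠ 0 := norm_pos_iff.mp hx0
  have hflux : flux p (fun y => -p * Real.log ‖y‖) =ᶠ[nhds x]
      fun y => (-p ^ (p - 1)) • ‖y‖ ^ (-p) • y :=
    (eventually_ne_nhds hx).mono fun y hy => by rw [flux_const_mul_log_norm p (-p) hy, hcoeff]
  have hdiv : -pdiv (flux p fun y => -p * Real.log ‖y‖) x
      = p ^ (p - 1) * ((N : ℝ) - p) * ‖x‖ ^ (-p) := by
    rw [hflux.pdiv_eq, pdiv_const_smul_norm_rpow_smul _ _ hx]
    ring
  have hV : HasFDerivAt (fun y => (-p ^ (p - 1)) • ‖y‖ ^ (-p) • y) _ x :=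
    (hasFDerivAt_norm_rpow_smul (-p) hx).const_smul (-p ^ (p - 1))
  refine ⟨(hasGradientAt_const_mul_log_norm (-p) hx).differentiableAt, ?_,
    hV.differentiableAt.congr_of_eventuallyEq hflux, hdiv, ?_⟩
  · rw [hflux.eq_of_nhds, smul_smul, Real.rpow_neg hx0.le, div_eq_mul_inv, neg_mul]
  · rw [hdiv, Real.rpow_def_of_pos hx0, mul_comm (Real.log ‖x‖)]

/-- for `N > p > 1`, the function `u(x) = -p log ‖x‖` on the punctured
unit ball is differentiable, has flux `-p^(p-1) x / ‖x‖^p`, the flux is differentiable,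
and `-Δ_p u(x) = p^(p-1) (N-p) ‖x‖^(-p) = p^(p-1) (N-p) e^(u(x))`; moreover `u = 0` on
the unit sphere. -/
theorem stmt16 {N : ℕ} (p : ℝ) (hp : 1 < p) (hpN : p < (N : ℝ))
    (u : EuclideanSpace ℝ (Fin N) → ℝ)
    (hu : u = fun x => -p * Real.log ‖x‖) :
    (∀ x : EuclideanSpace ℝ (Fin N), 0 < ‖x‖ → ‖x‖ < 1 →
      DifferentiableAt ℝ u x ∧
      flux p u x = (-(p ^ (p - 1) / ‖x‖ ^ p)) • x ∧
      DifferentiableAt ℝ (flux p u) x ∧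
      -pdiv (flux p u) x = p ^ (p - 1) * ((N : ℝ) - p) * ‖x‖ ^ (-p) ∧
      -pdiv (flux p u) x = p ^ (p - 1) * ((N : ℝ) - p) * Real.exp (u x)) ∧
    ∀ x : EuclideanSpace ℝ (Fin N), ‖x‖ = 1 → u x = 0 :=
  stmt16_general p hp u hu
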